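/- arXiv:2605.31028 — 10 statements merged into one kernel-verified Lean document; each statement's English description precedes it below -/
import Mathlib

section
/- Let c ∈ ℝ, let J ⊆ (0,∞) be an open interval, and let u : ℝ → ℝ be twice continuously differentiable on J with u(t) > 0 and 5t²·u''(t) + t·u'(t) - 3·u(t) + 5c·t² - 8t = 0 for all t ∈ J. Let I be an open interval and φ : ℝ → ℝ a function with φ(I) ⊆ J such that deriv φ r = -√(u(φ(r))) for all r ∈ I. Then φ is three times differentiable on I and for every r ∈ I one has 10·φ(r)²·φ'''(r) + 2·φ(r)·φ''(r)·φ'(r) - 3·φ'(r)³ + 5c·φ(r)²·φ'(r) - 8·φ(r)·φ'(r) = 0; equivalently, since φ'(r) = -√(u(φ(r))) < 0, the equation 10·φ(r)²·φ'''(r)/φ'(r) + 2·φ(r)·φ''(r) - 3·φ'(r)² + 5c·φ(r)² - 8·φ(r) = 0 holds. -/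
/-!
Differentiating `φ' = -√(u ∘ φ)` gives `φ'' = u'(φ)/2` (the square roots cancel because
`φ' = -√(u ∘ φ)` itself), and once more `φ''' = u''(φ) φ'/2`. Substituting these and
`φ'² = u(φ)` into the third-order expression yields `φ'/2` times the second-order ODE at
`t = φ(r)`; dividing by `φ' < 0` gives the second form.
-/

open Set Filter

section AutonomousODE

variable {φ ψ F u : ℝ → ℝ} {s : Set ℝ} {r F' : ℝ}

theorem hasDerivAt_of_eqOn_comp (hs : IsOpen s) (h : ∀ x ∈ s, ψ x = F (φ x)) (hr : r ∈ s)
    (hφ : DifferentiableAt ℝ φ r) (hF : HasDerivAt F F' (φ r)) :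
    HasDerivAt ψ (F' * deriv φ r) r :=
  (hF.comp r hφ.hasDerivAt).congr_of_eventuallyEq
    (eventuallyEq_of_mem (hs.mem_nhds hr) h)

theorem deriv_neg_of_deriv_eq_neg_sqrt (hphi : deriv φ r = -√(u (φ r))) (hpos : 0 < u (φ r)) :
    deriv φ r < 0 := by
  rw [hphi]
  exact neg_neg_of_pos (Real.sqrt_pos.2 hpos)

theorem hasDerivAt_deriv_of_deriv_eq_neg_sqrt (hs : IsOpen s)
    (hphi : ∀ x ∈ s, deriv φ x = -√(u (φ x))) (hr : r ∈ s) (hpos : 0 < u (φ r))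
    (hu : DifferentiableAt ℝ u (φ r)) :
    HasDerivAt (deriv φ) (deriv u (φ r) / 2) r := by
  have hφ : DifferentiableAt ℝ φ r :=
    differentiableAt_of_deriv_ne_zero (deriv_neg_of_deriv_eq_neg_sqrt (hphi r hr) hpos).ne
  have hsqrt : HasDerivAt (fun t => -√(u t)) (-(deriv u (φ r) / (2 * √(u (φ r))))) (φ r) :=
    (hu.hasDerivAt.sqrt hpos.ne').neg
  refine (hasDerivAt_of_eqOn_comp (φ := φ) hs hphi hr hφ hsqrt).congr_deriv ?_
  have : √(u (φ r)) ≠ 0 := (Real.sqrt_pos.2 hpos).ne'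
  rw [hphi r hr]
  field_simp

theorem hasDerivAt_deriv_deriv_of_deriv_eq_neg_sqrt (hs : IsOpen s)
    (hphi : ∀ x ∈ s, deriv φ x = -√(u (φ x))) (hpos : ∀ x ∈ s, 0 < u (φ x))
    (hu : ∀ x ∈ s, DifferentiableAt ℝ u (φ x)) (hr : r ∈ s)
    (hu' : DifferentiableAt ℝ (deriv u) (φ r)) :
    HasDerivAt (deriv (deriv φ)) (deriv (deriv u) (φ r) * deriv φ r / 2) r := by
  have hφ : DifferentiableAt ℝ φ r :=
    differentiableAt_of_deriv_ne_zero
      (deriv_neg_of_deriv_eq_neg_sqrt (hphi r hr) (hpos r hr)).ne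
  have hφ'' : ∀ x ∈ s, deriv (deriv φ) x = deriv u (φ x) / 2 := fun x hx =>
    (hasDerivAt_deriv_of_deriv_eq_neg_sqrt hs hphi hx (hpos x hx) (hu x hx)).deriv
  have := hasDerivAt_of_eqOn_comp hs hφ'' hr hφ (hu'.hasDerivAt.div_const 2)
  rwa [div_mul_eq_mul_div] at this

end AutonomousODE

theorem stmt2_general (c j₁ j₂ i₁ i₂ : ℝ) (u φ : ℝ → ℝ)
    (hu1 : ∀ t ∈ Set.Ioo j₁ j₂, DifferentiableAt ℝ u t)
    (hu2 : ∀ t ∈ Set.Ioo j₁ j₂, DifferentiableAt ℝ (deriv u) t)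
    (hupos : ∀ t ∈ Set.Ioo j₁ j₂, 0 < u t)
    (hode : ∀ t ∈ Set.Ioo j₁ j₂,
      5 * t ^ 2 * deriv (deriv u) t + t * deriv u t - 3 * u t + 5 * c * t ^ 2 - 8 * t = 0)
    (hmaps : Set.MapsTo φ (Set.Ioo i₁ i₂) (Set.Ioo j₁ j₂))
    (hphi : ∀ r ∈ Set.Ioo i₁ i₂, deriv φ r = -Real.sqrt (u (φ r))) :
    ∀ r ∈ Set.Ioo i₁ i₂,
      DifferentiableAt ℝ φ r ∧ DifferentiableAt ℝ (deriv φ) r ∧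
      DifferentiableAt ℝ (deriv (deriv φ)) r ∧
      10 * (φ r) ^ 2 * deriv (deriv (deriv φ)) r
        + 2 * φ r * deriv (deriv φ) r * deriv φ r
        - 3 * (deriv φ r) ^ 3
        + 5 * c * (φ r) ^ 2 * deriv φ r
        - 8 * φ r * deriv φ r = 0 ∧
      deriv φ r < 0 ∧
      10 * (φ r) ^ 2 * deriv (deriv (deriv φ)) r / deriv φ r
        + 2 * φ r * deriv (deriv φ) r
        - 3 * (deriv φ r) ^ 2
        + 5 * c * (φ r) ^ 2
        - 8 * φ r = 0 := by
  intro r hr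
  have ht := hmaps hr
  have hpos : ∀ x ∈ Ioo i₁ i₂, 0 < u (φ x) := fun x hx => hupos _ (hmaps hx)
  have hneg := deriv_neg_of_deriv_eq_neg_sqrt (hphi r hr) (hpos r hr)
  have hsq : deriv φ r ^ 2 = u (φ r) := by
    rw [hphi r hr, neg_sq, Real.sq_sqrt (hpos r hr).le]
  have h2 := hasDerivAt_deriv_of_deriv_eq_neg_sqrt isOpen_Ioo hphi hr (hpos r hr) (hu1 _ ht)
  have h3 := hasDerivAt_deriv_deriv_of_deriv_eq_neg_sqrt isOpen_Ioo hphi hpos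
    (fun x hx => hu1 _ (hmaps hx)) hr (hu2 _ ht)
  have hmain : 10 * (φ r) ^ 2 * deriv (deriv (deriv φ)) r
      + 2 * φ r * deriv (deriv φ) r * deriv φ r - 3 * (deriv φ r) ^ 3
      + 5 * c * (φ r) ^ 2 * deriv φ r - 8 * φ r * deriv φ r = 0 := by
    rw [h2.deriv, h3.deriv]
    linear_combination deriv φ r * hode (φ r) ht - 3 * deriv φ r * hsq
  refine ⟨differentiableAt_of_deriv_ne_zero hneg.ne, h2.differentiableAt,
    h3.differentiableAt, hmain, hneg, ?_⟩
  have := hneg.ne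
  field_simp
  linear_combination hmain

/-- the change of variables `t = φ(r)`, `φ'(r) = -√(u(φ(r)))`, transforms the
second-order linear ODE `5 t² u'' + t u' - 3 u + 5 c t² - 8 t = 0` into the third-order ODE
`10 φ² φ''' / φ' + 2 φ φ'' - 3 φ'² + 5 c φ² - 8 φ = 0`. -/
theorem stmt2 (c j₁ j₂ i₁ i₂ : ℝ) (u φ : ℝ → ℝ)
    (hJ : Set.Ioo j₁ j₂ ⊆ Set.Ioi (0 : ℝ))
    (hu1 : ∀ t ∈ Set.Ioo j₁ j₂, DifferentiableAt ℝ u t)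
    (hu2 : ∀ t ∈ Set.Ioo j₁ j₂, DifferentiableAt ℝ (deriv u) t)
    (hu3 : ContinuousOn (deriv (deriv u)) (Set.Ioo j₁ j₂))
    (hupos : ∀ t ∈ Set.Ioo j₁ j₂, 0 < u t)
    (hode : ∀ t ∈ Set.Ioo j₁ j₂,
      5 * t ^ 2 * deriv (deriv u) t + t * deriv u t - 3 * u t + 5 * c * t ^ 2 - 8 * t = 0)
    (hmaps : Set.MapsTo φ (Set.Ioo i₁ i₂) (Set.Ioo j₁ j₂))
    (hphi : ∀ r ∈ Set.Ioo i₁ i₂, deriv φ r = -Real.sqrt (u (φ r))) :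
    ∀ r ∈ Set.Ioo i₁ i₂,
      DifferentiableAt ℝ φ r ∧ DifferentiableAt ℝ (deriv φ) r ∧
      DifferentiableAt ℝ (deriv (deriv φ)) r ∧
      10 * (φ r) ^ 2 * deriv (deriv (deriv φ)) r
        + 2 * φ r * deriv (deriv φ) r * deriv φ r
        - 3 * (deriv φ r) ^ 3
        + 5 * c * (φ r) ^ 2 * deriv φ r
        - 8 * φ r * deriv φ r = 0 ∧
      deriv φ r < 0 ∧
      10 * (φ r) ^ 2 * deriv (deriv (deriv φ)) r / deriv φ r
        + 2 * φ r * deriv (deriv φ) r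
        - 3 * (deriv φ r) ^ 2
        + 5 * c * (φ r) ^ 2
        - 8 * φ r = 0 :=
  stmt2_general c j₁ j₂ i₁ i₂ u φ hu1 hu2 hupos hode hmaps hphi
end

section
/- Define β : ℝ → ℝ by β(k) = 2√19·k^((8+√19)/5) - (8+√19)·k^((2√19)/5) + (8-√19), where real powers are the real power function. Then β(1) = 0, β(0) = 8-√19 > 0, and β(k) > 0 for every k with 0 < k < 1. -/
/-! With `p = (8 + √19)/5` and `q = 2√19/5` one has `β k = 5 (q k^p - p k^q + (p - q))`, and
for `0 < q < p` the bracket is positive away from `k = 1`: putting `t = k^q`, this is the strict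
Bernoulli inequality `1 + (p/q)(t - 1) < t^(p/q)`. -/

namespace Real

theorem sub_mul_rpow_add_sub_pos {p q k : ℝ} (hq : 0 < q) (hqp : q < p) (hk : 0 ≤ k)
    (hk1 : k ≠ 1) : 0 < q * k ^ p - p * k ^ q + (p - q) := by
  set t := k ^ q
  have ht : t ≠ 1 := by
    rw [← one_rpow q, Ne, rpow_left_inj hk zero_le_one hq.ne']
    exact hk1
  have hpow : k ^ p = t ^ (p / q) := by
    rw [← rpow_mul hk, mul_div_cancel₀ _ hq.ne']
  have bernoulli : 1 + p / q * (t - 1) < (1 + (t - 1)) ^ (p / q) :=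
    one_add_mul_self_lt_rpow_one_add (by linarith [rpow_nonneg hk q]) (sub_ne_zero.2 ht)
      ((one_lt_div hq).2 hqp)
  rw [add_sub_cancel, ← hpow] at bernoulli
  have := mul_lt_mul_of_pos_left bernoulli hq
  rw [mul_add, ← mul_assoc, mul_div_cancel₀ _ hq.ne'] at this
  linarith

end Real

/-- the function
`β k = 2√19 k^((8+√19)/5) - (8+√19) k^((2√19)/5) + (8-√19)` satisfies
`β 1 = 0`, `β 0 = 8 - √19 > 0`, and `β k > 0` for `0 < k < 1`. -/
theorem stmt3 :
    let β : ℝ → ℝ := fun k =>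
      2 * Real.sqrt 19 * k ^ ((8 + Real.sqrt 19) / 5)
        - (8 + Real.sqrt 19) * k ^ (2 * Real.sqrt 19 / 5) + (8 - Real.sqrt 19)
    β 1 = 0 ∧ β 0 = 8 - Real.sqrt 19 ∧ 0 < 8 - Real.sqrt 19 ∧
      ∀ k : ℝ, 0 < k → k < 1 → 0 < β k := by
  intro β
  have hs0 : 0 < Real.sqrt 19 := by positivity
  have hs8 : Real.sqrt 19 < 8 := by
    rw [Real.sqrt_lt' (by norm_num)]
    norm_num
  refine ⟨?_, ?_, by linarith, fun k hk0 hk1 => ?_⟩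
  · simp only [β, Real.one_rpow]
    ring
  · simp only [β, Real.zero_rpow (by positivity : (8 + Real.sqrt 19) / 5 ≠ 0),
      Real.zero_rpow (by positivity : 2 * Real.sqrt 19 / 5 ≠ 0)]
    ring
  · have := Real.sub_mul_rpow_add_sub_pos (p := (8 + Real.sqrt 19) / 5)
      (by positivity : 0 < 2 * Real.sqrt 19 / 5) (by linarith) hk0.le hk1.ne
    simp only [β]
    linarith
end

section
/- Define β : ℝ → ℝ by β(k) = 2√19·k^((8+√19)/5) - (8+√19)·k^((2√19)/5) + (8-√19), where real powers are the real power function. Then for every k with 0 < k < 1, β is differentiable at k with deriv β k = -(2√19(8+√19)/5)·(1 - k^((8-√19)/5))·k^((2√19-5)/5), and in particular deriv β k < 0. -/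
/-! The coefficients of `β` are balanced, `2√19 · (8+√19)/5 = (8+√19) · 2√19/5`, so the two
terms of `β'` share this constant and `β'(k)` factors as `-c (1 - k^(a-b)) k^(b-1)` with
exponents `a = (8+√19)/5 > b = 2√19/5`; for `0 < k < 1` this is negative. -/

open Real

theorem hasDerivAt_mul_rpow_sub_mul_rpow_add_const {A B C a b c k : ℝ} (hk : 0 < k)
    (ha : A * a = c) (hb : B * b = c) :
    HasDerivAt (fun x => A * x ^ a - B * x ^ b + C) (-c * (1 - k ^ (a - b)) * k ^ (b - 1)) k := by
  have hsplit : k ^ (a - 1) = k ^ (a - b) * k ^ (b - 1) := by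
    rw [← rpow_add hk]; ring_nf
  have h : HasDerivAt (fun x => A * x ^ a - B * x ^ b + C)
      (A * (a * k ^ (a - 1)) - B * (b * k ^ (b - 1))) k :=
    (((hasDerivAt_rpow_const (Or.inl hk.ne')).const_mul A).sub
      ((hasDerivAt_rpow_const (Or.inl hk.ne')).const_mul B)).add_const C
  refine h.congr_deriv ?_
  rw [hsplit]
  linear_combination (k ^ (a - b) * k ^ (b - 1)) * ha - k ^ (b - 1) * hb

theorem neg_mul_one_sub_rpow_mul_rpow_neg {c d e k : ℝ} (hc : 0 < c) (hk0 : 0 < k) (hk1 : k < 1)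
    (hd : 0 < d) : -c * (1 - k ^ d) * k ^ e < 0 := by
  have hkd : 0 < 1 - k ^ d := sub_pos.mpr (rpow_lt_one hk0.le hk1 hd)
  have hke : 0 < k ^ e := rpow_pos_of_pos hk0 e
  simpa only [neg_mul, neg_lt_zero] using mul_pos (mul_pos hc hkd) hke

theorem sqrt_nineteen_lt_eight : √19 < 8 := by
  rw [sqrt_lt' (by norm_num)]; norm_num

/-- for `0 < k < 1`, the function
`β k = 2√19 k^((8+√19)/5) - (8+√19) k^((2√19)/5) + (8-√19)` is differentiable at `k` with
`β'(k) = -(2√19(8+√19)/5) (1 - k^((8-√19)/5)) k^((2√19-5)/5) < 0`. -/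
theorem stmt4 (k : ℝ) (hk0 : 0 < k) (hk1 : k < 1) :
    let β : ℝ → ℝ := fun k =>
      2 * Real.sqrt 19 * k ^ ((8 + Real.sqrt 19) / 5)
        - (8 + Real.sqrt 19) * k ^ (2 * Real.sqrt 19 / 5) + (8 - Real.sqrt 19)
    DifferentiableAt ℝ β k ∧
      deriv β k = -(2 * Real.sqrt 19 * (8 + Real.sqrt 19) / 5)
        * (1 - k ^ ((8 - Real.sqrt 19) / 5)) * k ^ ((2 * Real.sqrt 19 - 5) / 5) ∧
      deriv β k < 0 := by
  intro β
  have hexp₁ : (8 - √19) / 5 = (8 + √19) / 5 - 2 * √19 / 5 := by ring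
  have hexp₂ : (2 * √19 - 5) / 5 = 2 * √19 / 5 - 1 := by ring
  have hβ : HasDerivAt β (-(2 * √19 * (8 + √19) / 5)
      * (1 - k ^ ((8 - √19) / 5)) * k ^ ((2 * √19 - 5) / 5)) k := by
    rw [hexp₁, hexp₂]
    exact hasDerivAt_mul_rpow_sub_mul_rpow_add_const hk0 (by ring) (by ring)
  refine ⟨hβ.differentiableAt, hβ.deriv, hβ.deriv ▸ ?_⟩
  exact neg_mul_one_sub_rpow_mul_rpow_neg (by positivity) hk0 hk1
    (by linarith [sqrt_nineteen_lt_eight])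
end

section
/- Let m > 0 be a real number and define α : ℝ → ℝ by α(k) = 2((8-√19)m - 2(√19+1))·k^(1+(2√19)/5) - 4√19(m-2)·k^((8+√19)/5) + 2((8+√19)m - 2(√19-1))·k^((2√19)/5) - 2((8+√19)m + 2(√19-1))·k + 4√19(m+2)·k^((√19-3)/5) - 2((8-√19)m + 2(√19+1)), where real powers are the real power function. Then α(1) = 0, the first derivative of α at 1 equals 0, the second derivative of α at 1 equals 0, and the third derivative of α at 1 equals -(36√19/25)·m, which is strictly negative. -/
/-!
Writing its linear and constant terms as `k ^ 1` and `k ^ 0`, `α` is a combination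
`∑ cᵢ k ^ pᵢ` of real powers, so its `n`-th derivative at `1` is `∑ cᵢ pᵢ (pᵢ - 1) ⋯ (pᵢ - n + 1)`.
For `n ≤ 3` these are polynomials in `m` and `√19`, and the claimed values follow by reducing
them modulo `√19 ^ 2 = 19`.
-/

open Finset

theorem iteratedDeriv_sum_mul_rpow {ι : Type*} (s : Finset ι) (c p : ι → ℝ) (n : ℕ) {x : ℝ}
    (hx : x ≠ 0) :
    iteratedDeriv n (fun k => ∑ i ∈ s, c i * k ^ p i) x =
      ∑ i ∈ s, c i * ((descPochhammer ℝ n).eval (p i) * x ^ (p i - n)) := by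
  rw [iteratedDeriv_fun_sum fun i _ => contDiffAt_const.mul (Real.contDiffAt_rpow_const (.inl hx))]
  refine sum_congr rfl fun i _ => ?_
  rw [iteratedDeriv_const_mul_field, iteratedDeriv_eq_iterate, Real.iter_deriv_rpow_const]

theorem iteratedDeriv_sum_mul_rpow_one {ι : Type*} (s : Finset ι) (c p : ι → ℝ) (n : ℕ) :
    iteratedDeriv n (fun k => ∑ i ∈ s, c i * k ^ p i) 1 =
      ∑ i ∈ s, c i * (descPochhammer ℝ n).eval (p i) := by
  simp [iteratedDeriv_sum_mul_rpow s c p n one_ne_zero]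

/-- for `m > 0`, the function `α` below satisfies
`α 1 = 0`, `α' 1 = 0`, `α'' 1 = 0`, `α''' 1 = -(36√19/25) m < 0`
(iterated derivatives in the sense of `iteratedDeriv`). -/
theorem stmt5 (m : ℝ) (hm : 0 < m) :
    let α : ℝ → ℝ := fun k =>
      2 * ((8 - Real.sqrt 19) * m - 2 * (Real.sqrt 19 + 1)) * k ^ (1 + 2 * Real.sqrt 19 / 5)
        - 4 * Real.sqrt 19 * (m - 2) * k ^ ((8 + Real.sqrt 19) / 5)
        + 2 * ((8 + Real.sqrt 19) * m - 2 * (Real.sqrt 19 - 1)) * k ^ (2 * Real.sqrt 19 / 5)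
        - 2 * ((8 + Real.sqrt 19) * m + 2 * (Real.sqrt 19 - 1)) * k
        + 4 * Real.sqrt 19 * (m + 2) * k ^ ((Real.sqrt 19 - 3) / 5)
        - 2 * ((8 - Real.sqrt 19) * m + 2 * (Real.sqrt 19 + 1))
    α 1 = 0 ∧ iteratedDeriv 1 α 1 = 0 ∧ iteratedDeriv 2 α 1 = 0 ∧
      iteratedDeriv 3 α 1 = -(36 * Real.sqrt 19 / 25) * m ∧
      -(36 * Real.sqrt 19 / 25) * m < 0 := by
  intro α
  set s := Real.sqrt 19
  have hs : s ^ 2 = 19 := Real.sq_sqrt (by norm_num)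
  set c : Fin 6 → ℝ := ![2 * ((8 - s) * m - 2 * (s + 1)), -(4 * s * (m - 2)),
    2 * ((8 + s) * m - 2 * (s - 1)), -(2 * ((8 + s) * m + 2 * (s - 1))), 4 * s * (m + 2),
    -(2 * ((8 - s) * m + 2 * (s + 1)))]
  set p : Fin 6 → ℝ := ![1 + 2 * s / 5, (8 + s) / 5, 2 * s / 5, 1, (s - 3) / 5, 0]
  have hα : α = fun k => ∑ i, c i * k ^ p i := by
    funext k
    simp only [α, c, p, Fin.sum_univ_six, Matrix.cons_val, Real.rpow_one, Real.rpow_zero]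
    ring
  have hderiv (n : ℕ) : iteratedDeriv n α 1 = ∑ i, c i * (descPochhammer ℝ n).eval (p i) := by
    rw [hα, iteratedDeriv_sum_mul_rpow_one]
  have hα_one := hderiv 0
  rw [iteratedDeriv_zero] at hα_one
  rw [hα_one, hderiv, hderiv, hderiv]
  simp only [c, p, Fin.sum_univ_six, Matrix.cons_val, descPochhammer_succ_right,
    descPochhammer_zero, Polynomial.eval_mul, Polynomial.eval_sub, Polynomial.eval_X,
    Polynomial.eval_natCast, Polynomial.eval_one]
  refine ⟨by ring, by ring, by linear_combination (-16 / 25 * s) * hs,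
    by linear_combination (24 / 25 * s + 4 / 125 * s * m - 48 / 125 * s ^ 2) * hs, ?_⟩
  exact mul_neg_of_neg_of_pos (neg_neg_of_pos (by positivity)) hm
end

section
/- Let m > 0 be a real number and define α : ℝ → ℝ by α(k) = 2((8-√19)m - 2(√19+1))·k^(1+(2√19)/5) - 4√19(m-2)·k^((8+√19)/5) + 2((8+√19)m - 2(√19-1))·k^((2√19)/5) - 2((8+√19)m + 2(√19-1))·k + 4√19(m+2)·k^((√19-3)/5) - 2((8-√19)m + 2(√19+1)), where real powers are the real power function. Then there exists δ ∈ (0,1) such that α(k) > 0 for all k ∈ (1-δ, 1). -/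
/-!
`α` is a sum of real powers of `k`, so its derivatives are again such sums and can be evaluated
at `k = 1` by pure algebra in `√19`: `α(1) = α'(1) = α''(1) = 0` and `α'''(1) = -(36√19/25) m < 0`.
Hence `α''' < 0` near `1`, and integrating back from `1` three times flips the sign on the left
each time: `α'' > 0`, `α' < 0`, and finally `α > 0` on some interval `(1 - δ, 1)`.
-/

open Filter Topology Set

lemma eventually_pos_nhdsLT_of_hasDerivAt_neg {f f' : ℝ → ℝ} {a : ℝ}
    (hf : ∀ᶠ x in 𝓝 a, HasDerivAt f (f' x) x) (ha : f a = 0)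
    (hf' : ∀ᶠ x in 𝓝[<] a, f' x < 0) : ∀ᶠ x in 𝓝[<] a, 0 < f x := by
  obtain ⟨l, hla, hl⟩ := mem_nhdsLT_iff_exists_Ioo_subset.mp
    (hf'.and (nhdsWithin_le_nhds hf))
  have hanti : StrictAntiOn f (Ioc l a) := by
    refine strictAntiOn_of_hasDerivWithinAt_neg (f' := f') (convex_Ioc l a) ?_ ?_ ?_
    · intro x hx
      rcases hx.2.lt_or_eq with hxa | rfl
      · exact (hl ⟨hx.1, hxa⟩).2.continuousAt.continuousWithinAt
      · exact hf.self_of_nhds.continuousAt.continuousWithinAt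
    · rw [interior_Ioc]
      exact fun x hx => (hl hx).2.hasDerivWithinAt
    · rw [interior_Ioc]
      exact fun x hx => (hl hx).1
  refine mem_nhdsLT_iff_exists_Ioo_subset.mpr ⟨l, hla, fun x hx => ?_⟩
  simpa [ha] using hanti ⟨hx.1, hx.2.le⟩ ⟨hla, le_rfl⟩ hx.2

lemma eventually_neg_nhdsLT_of_hasDerivAt_pos {f f' : ℝ → ℝ} {a : ℝ}
    (hf : ∀ᶠ x in 𝓝 a, HasDerivAt f (f' x) x) (ha : f a = 0)
    (hf' : ∀ᶠ x in 𝓝[<] a, 0 < f' x) : ∀ᶠ x in 𝓝[<] a, f x < 0 := by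
  have := eventually_pos_nhdsLT_of_hasDerivAt_neg (f := -f) (f' := -f')
    (hf.mono fun x hx => hx.neg) (by simp [ha]) (hf'.mono fun x hx => by simpa using hx)
  exact this.mono fun x hx => by simpa using hx

noncomputable def powerSum {ι : Type*} [Fintype ι] (c p : ι → ℝ) (x : ℝ) : ℝ :=
  ∑ i, c i * x ^ p i

section powerSum

variable {ι : Type*} [Fintype ι] (c p : ι → ℝ)

lemma hasDerivAt_powerSum {x : ℝ} (hx : x ≠ 0) :
    HasDerivAt (powerSum c p) (powerSum (c * p) (p - 1) x) x := by
  unfold powerSum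
  refine HasDerivAt.fun_sum fun i _ => ?_
  simpa [mul_assoc] using ((Real.hasDerivAt_rpow_const (p := p i) (Or.inl hx)).const_mul (c i))

lemma eventually_hasDerivAt_powerSum :
    ∀ᶠ x in 𝓝 1, HasDerivAt (powerSum c p) (powerSum (c * p) (p - 1) x) x :=
  (eventually_ne_nhds one_ne_zero).mono fun _ hx => hasDerivAt_powerSum c p hx

lemma powerSum_one : powerSum c p 1 = ∑ i, c i := by
  simp [powerSum]

end powerSum

noncomputable def alphaCoeff (m s : ℝ) : Fin 6 → ℝ :=
  ![2 * ((8 - s) * m - 2 * (s + 1)), -(4 * s * (m - 2)), 2 * ((8 + s) * m - 2 * (s - 1)),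
    -(2 * ((8 + s) * m + 2 * (s - 1))), 4 * s * (m + 2), -(2 * ((8 - s) * m + 2 * (s + 1)))]

noncomputable def alphaExponent (s : ℝ) : Fin 6 → ℝ :=
  ![1 + 2 * s / 5, (8 + s) / 5, 2 * s / 5, 1, (s - 3) / 5, 0]

section alpha

variable (m s : ℝ)

lemma powerSum_alpha_one : powerSum (alphaCoeff m s) (alphaExponent s) 1 = 0 := by
  simp only [powerSum_one, Fin.sum_univ_six, alphaCoeff, Matrix.cons_val]
  ring

lemma deriv_powerSum_alpha_one :
    powerSum (alphaCoeff m s * alphaExponent s) (alphaExponent s - 1) 1 = 0 := by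
  simp only [powerSum_one, Fin.sum_univ_six, Pi.mul_apply, alphaCoeff, alphaExponent,
    Matrix.cons_val]
  ring

lemma deriv2_powerSum_alpha_one (hs : s ^ 2 = 19) :
    powerSum (alphaCoeff m s * alphaExponent s * (alphaExponent s - 1))
      (alphaExponent s - 1 - 1) 1 = 0 := by
  simp only [powerSum_one, Fin.sum_univ_six, Pi.mul_apply, Pi.sub_apply, Pi.one_apply, alphaCoeff,
    alphaExponent, Matrix.cons_val]
  linear_combination (-16 / 25 * s) * hs

lemma deriv3_powerSum_alpha_one (hs : s ^ 2 = 19) :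
    powerSum (alphaCoeff m s * alphaExponent s * (alphaExponent s - 1) * (alphaExponent s - 1 - 1))
      (alphaExponent s - 1 - 1 - 1) 1 = -(36 / 25) * s * m := by
  simp only [powerSum_one, Fin.sum_univ_six, Pi.mul_apply, Pi.sub_apply, Pi.one_apply, alphaCoeff,
    alphaExponent, Matrix.cons_val]
  linear_combination (-48 / 125 * s ^ 2 + 4 / 125 * s * m + 24 / 25 * s) * hs

end alpha

/-- for `m > 0`, the function `α` below is strictly positive on some
left neighbourhood `(1-δ, 1)` of `1`, with `δ ∈ (0,1)`. -/
theorem stmt6 (m : ℝ) (hm : 0 < m) :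
    let α : ℝ → ℝ := fun k =>
      2 * ((8 - Real.sqrt 19) * m - 2 * (Real.sqrt 19 + 1)) * k ^ (1 + 2 * Real.sqrt 19 / 5)
        - 4 * Real.sqrt 19 * (m - 2) * k ^ ((8 + Real.sqrt 19) / 5)
        + 2 * ((8 + Real.sqrt 19) * m - 2 * (Real.sqrt 19 - 1)) * k ^ (2 * Real.sqrt 19 / 5)
        - 2 * ((8 + Real.sqrt 19) * m + 2 * (Real.sqrt 19 - 1)) * k
        + 4 * Real.sqrt 19 * (m + 2) * k ^ ((Real.sqrt 19 - 3) / 5)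
        - 2 * ((8 - Real.sqrt 19) * m + 2 * (Real.sqrt 19 + 1))
    ∃ δ : ℝ, δ ∈ Set.Ioo (0 : ℝ) 1 ∧ ∀ k ∈ Set.Ioo (1 - δ) 1, 0 < α k := by
  intro α
  set s := Real.sqrt 19
  have hs : s ^ 2 = 19 := Real.sq_sqrt (by norm_num)
  set c := alphaCoeff m s
  set p := alphaExponent s
  have hα : α = powerSum c p := by
    funext k
    simp only [α, c, p, powerSum, alphaCoeff, alphaExponent, Fin.sum_univ_six, Matrix.cons_val,
      Real.rpow_one, Real.rpow_zero]
    ring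
  have hα₃_neg :
      ∀ᶠ x in 𝓝[<] 1, powerSum (c * p * (p - 1) * (p - 1 - 1)) (p - 1 - 1 - 1) x < 0 := by
    refine nhdsWithin_le_nhds
      ((hasDerivAt_powerSum _ _ one_ne_zero).continuousAt.eventually_lt_const ?_)
    rw [deriv3_powerSum_alpha_one m s hs]
    have : 0 < s * m := mul_pos (Real.sqrt_pos.mpr (by norm_num)) hm
    linarith
  have hα₂_pos := eventually_pos_nhdsLT_of_hasDerivAt_neg (eventually_hasDerivAt_powerSum _ _)
    (deriv2_powerSum_alpha_one m s hs) hα₃_neg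
  have hα₁_neg := eventually_neg_nhdsLT_of_hasDerivAt_pos (eventually_hasDerivAt_powerSum _ _)
    (deriv_powerSum_alpha_one m s) hα₂_pos
  have hα_pos := eventually_pos_nhdsLT_of_hasDerivAt_neg (eventually_hasDerivAt_powerSum _ _)
    (powerSum_alpha_one m s) hα₁_neg
  obtain ⟨l, hl1, hl⟩ := mem_nhdsLT_iff_exists_Ioo_subset.mp hα_pos
  refine ⟨min (1 - l) (1 / 2), ⟨by simp [hl1.out], by norm_num⟩, fun k hk => ?_⟩
  rw [hα]
  exact hl ⟨by linarith [hk.1, min_le_left (1 - l) (1 / 2)], hk.2⟩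
end

section
/- Let k, m, c be real numbers with 0 < k < 1 and m > 0, and let u : ℝ → ℝ be twice continuously differentiable on the closed interval [k,1] and satisfy 5t²·u''(t) + t·u'(t) - 3·u(t) + 5c·t² - 8t = 0 for all t ∈ [k,1], together with the boundary conditions u(k) = 0, u(1) = 0, u'(k) = 2m, u'(1) = -2m. Then c > 0 and u(t) > 0 for every t with k < t < 1. -/
/-!
At an interior critical point `p` of `u` the ODE reads `p (5 c p - 8) = 3 u(p) - 5 p² u''(p)`.
At a positive local maximum the right-hand side is positive, so `5 c p > 8`; at a non-positive
local minimum it is non-positive, so `5 c p ≤ 8`. Since `u(k) = 0` and `u'(k) > 0`, `u` is positive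
just to the right of `k`, so its maximum on `[k, 1]` is a positive interior maximum, whence `c > 0`.
If `u(t) ≤ 0` for some `t ∈ (k, 1)`, there is a positive interior maximum `p` of `u` on `[k, t]`
and then a non-positive interior minimum `q > p` on `[p, 1]`, giving `8 < 5 c p < 5 c q ≤ 8`.
-/

open Set Filter Topology

section DerivativeTests

variable {f : ℝ → ℝ} {x : ℝ}

/-- If `deriv (deriv f) x > 0`, the second-derivative test makes `x` a local minimum as well,
so `f` is locally constant near `x`. -/
theorem IsLocalMax.deriv_deriv_nonpos (hmax : IsLocalMax f x) (hf : ContinuousAt f x) :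
    deriv (deriv f) x ≤ 0 := by
  by_contra! hpos
  have hmin := isLocalMin_of_deriv_deriv_pos hpos hmax.deriv_eq_zero hf
  have hconst : f =ᶠ[𝓝 x] fun _ ↦ f x :=
    (hmin.and hmax).mono fun y hy ↦ le_antisymm hy.2 hy.1
  rw [hconst.deriv.deriv_eq] at hpos
  simp at hpos

theorem IsLocalMin.deriv_deriv_nonneg (hmin : IsLocalMin f x) (hf : ContinuousAt f x) :
    0 ≤ deriv (deriv f) x := by
  by_contra! hneg
  have hmax := isLocalMax_of_deriv_deriv_neg hneg hmin.deriv_eq_zero hf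
  have hconst : f =ᶠ[𝓝 x] fun _ ↦ f x :=
    (hmin.and hmax).mono fun y hy ↦ le_antisymm hy.2 hy.1
  rw [hconst.deriv.deriv_eq] at hneg
  simp at hneg

theorem exists_mem_Ioo_pos_of_deriv_pos (hx : f x = 0) (hf : 0 < deriv f x) {b : ℝ}
    (hxb : x < b) : ∃ y ∈ Ioo x b, 0 < f y := by
  have hsign : ∀ᶠ y in 𝓝[>] x, SignType.sign (f y) = SignType.sign (y - x) :=
    nhdsWithin_le_nhds (eventually_nhdsWithin_sign_eq_of_deriv_pos hf hx)
  obtain ⟨y, hy, hyb⟩ := (hsign.and (Ioo_mem_nhdsGT hxb)).exists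
  rw [sign_eq_one_iff.2 (sub_pos.2 hyb.1), sign_eq_one_iff] at hy
  exact ⟨y, hyb, hy⟩

end DerivativeTests

section InteriorExtremum

variable {α β : Type*} [ConditionallyCompleteLinearOrder α] [TopologicalSpace α] [OrderTopology α]
  [LinearOrder β] [TopologicalSpace β] [OrderClosedTopology β] {u : α → β} {a b s : α}

theorem exists_mem_Ioo_isLocalMin_le (hu : ContinuousOn u (Icc a b)) (hs : s ∈ Ioo a b)
    (ha : u s < u a) (hb : u s ≤ u b) : ∃ q ∈ Ioo a b, IsLocalMin u q ∧ u q ≤ u s := by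
  obtain ⟨q, hq, hqmin⟩ :=
    isCompact_Icc.exists_isMinOn (nonempty_Icc.2 (hs.1.trans hs.2).le) hu
  have hqs : u q ≤ u s := hqmin (Ioo_subset_Icc_self hs)
  have hqa : a < q := hq.1.lt_of_ne (by rintro rfl; exact (hqs.trans_lt ha).false)
  rcases hq.2.lt_or_eq with hqb | rfl
  · exact ⟨q, ⟨hqa, hqb⟩, hqmin.isLocalMin (Icc_mem_nhds hqa hqb), hqs⟩
  · have hsmin : IsMinOn u (Icc a q) s := fun y hy ↦ hb.trans (hqmin hy)
    exact ⟨s, hs, hsmin.isLocalMin (Icc_mem_nhds hs.1 hs.2), le_rfl⟩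

theorem exists_mem_Ioo_isLocalMax_ge (hu : ContinuousOn u (Icc a b)) (hs : s ∈ Ioo a b)
    (ha : u a < u s) (hb : u b ≤ u s) : ∃ p ∈ Ioo a b, IsLocalMax u p ∧ u s ≤ u p :=
  exists_mem_Ioo_isLocalMin_le (β := βᵒᵈ) hu hs ha hb

end InteriorExtremum

section CriticalPoints

variable {u : ℝ → ℝ} {c p : ℝ}

theorem eight_lt_of_isLocalMax (hp : 0 < p)
    (hode : 5 * p ^ 2 * deriv (deriv u) p + p * deriv u p - 3 * u p + 5 * c * p ^ 2 - 8 * p = 0)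
    (hmax : IsLocalMax u p) (hu : ContinuousAt u p) (hpos : 0 < u p) : 8 < 5 * c * p := by
  have hd2 := hmax.deriv_deriv_nonpos hu
  rw [hmax.deriv_eq_zero] at hode
  nlinarith [mul_nonpos_of_nonneg_of_nonpos (sq_nonneg p) hd2]

theorem le_eight_of_isLocalMin (hp : 0 < p)
    (hode : 5 * p ^ 2 * deriv (deriv u) p + p * deriv u p - 3 * u p + 5 * c * p ^ 2 - 8 * p = 0)
    (hmin : IsLocalMin u p) (hu : ContinuousAt u p) (hnonpos : u p ≤ 0) : 5 * c * p ≤ 8 := by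
  have hd2 := hmin.deriv_deriv_nonneg hu
  rw [hmin.deriv_eq_zero] at hode
  nlinarith [mul_nonneg (sq_nonneg p) hd2]

end CriticalPoints

theorem stmt8_general (k m c : ℝ) (hk0 : 0 < k) (hk1 : k < 1) (hm : 0 < m) (u : ℝ → ℝ)
    (hu1 : ∀ t ∈ Set.Icc k 1, DifferentiableAt ℝ u t)
    (hode : ∀ t ∈ Set.Icc k 1,
      5 * t ^ 2 * deriv (deriv u) t + t * deriv u t - 3 * u t + 5 * c * t ^ 2 - 8 * t = 0)
    (hbk : u k = 0) (hb1 : u 1 = 0)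
    (hdk : deriv u k = 2 * m) :
    0 < c ∧ ∀ t : ℝ, k < t → t < 1 → 0 < u t := by
  have hcont : ContinuousOn u (Icc k 1) := fun t ht ↦ (hu1 t ht).continuousAt.continuousWithinAt
  have hmax : ∀ p ∈ Ioo k 1, IsLocalMax u p → 0 < u p → 8 < 5 * c * p := fun p hp hpmax ↦
    eight_lt_of_isLocalMax (hk0.trans hp.1) (hode p (Ioo_subset_Icc_self hp)) hpmax
      (hu1 p (Ioo_subset_Icc_self hp)).continuousAt
  have hmin : ∀ q ∈ Ioo k 1, IsLocalMin u q → u q ≤ 0 → 5 * c * q ≤ 8 := fun q hq hqmin ↦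
    le_eight_of_isLocalMin (hk0.trans hq.1) (hode q (Ioo_subset_Icc_self hq)) hqmin
      (hu1 q (Ioo_subset_Icc_self hq)).continuousAt
  have hpos_near_k : ∀ t, k < t → ∃ x ∈ Ioo k t, 0 < u x := fun t ↦
    exists_mem_Ioo_pos_of_deriv_pos hbk (by linarith)
  have hc : 0 < c := by
    obtain ⟨x, hx, hux⟩ := hpos_near_k 1 hk1
    obtain ⟨p, hp, hpmax, hxp⟩ :=
      exists_mem_Ioo_isLocalMax_ge hcont hx (hbk ▸ hux) (hb1 ▸ hux.le)
    nlinarith [hmax p hp hpmax (hux.trans_le hxp), hk0.trans hp.1]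
  refine ⟨hc, fun t hkt ht1 ↦ ?_⟩
  by_contra! hut
  obtain ⟨x, hx, hux⟩ := hpos_near_k t hkt
  obtain ⟨p, hp, hpmax, hxp⟩ := exists_mem_Ioo_isLocalMax_ge
    (hcont.mono (Icc_subset_Icc_right ht1.le)) hx (hbk ▸ hux) (hut.trans hux.le)
  have hup : 0 < u p := hux.trans_le hxp
  obtain ⟨q, hq, hqmin, hqt⟩ := exists_mem_Ioo_isLocalMin_le
    (hcont.mono (Icc_subset_Icc_left hp.1.le)) ⟨hp.2, ht1⟩ (hut.trans_lt hup) (hb1 ▸ hut)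
  have hp1 : p ∈ Ioo k 1 := ⟨hp.1, hp.2.trans ht1⟩
  have hq1 : q ∈ Ioo k 1 := ⟨hp.1.trans hq.1, hq.2⟩
  nlinarith [hmax p hp1 hpmax hup, hmin q hq1 hqmin (hqt.trans hut), mul_lt_mul_of_pos_left hq.1 hc]

/-- sign analysis for the boundary value problem
`5 t² u'' + t u' - 3 u + 5 c t² - 8 t = 0` on `[k,1]`, with
`u(k) = u(1) = 0`, `u'(k) = 2m`, `u'(1) = -2m`, `0 < k < 1`, `m > 0`:
then `c > 0` and `u > 0` on `(k,1)`. -/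
theorem stmt8 (k m c : ℝ) (hk0 : 0 < k) (hk1 : k < 1) (hm : 0 < m) (u : ℝ → ℝ)
    (hu1 : ∀ t ∈ Set.Icc k 1, DifferentiableAt ℝ u t)
    (hu2 : ∀ t ∈ Set.Icc k 1, DifferentiableAt ℝ (deriv u) t)
    (hu3 : ContinuousOn (deriv (deriv u)) (Set.Icc k 1))
    (hode : ∀ t ∈ Set.Icc k 1,
      5 * t ^ 2 * deriv (deriv u) t + t * deriv u t - 3 * u t + 5 * c * t ^ 2 - 8 * t = 0)
    (hbk : u k = 0) (hb1 : u 1 = 0)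
    (hdk : deriv u k = 2 * m) (hd1 : deriv u 1 = -(2 * m)) :
    0 < c ∧ ∀ t : ℝ, k < t → t < 1 → 0 < u t :=
  stmt8_general k m c hk0 hk1 hm u hu1 hode hbk hb1 hdk
end

section
/- Let k < 1 be a real number and let u : ℝ → ℝ be continuous on the closed interval [k,1], strictly positive on the open interval (k,1), with u(k) = 0 and u(1) = 0, differentiable at k with deriv u k > 0 and differentiable at 1 with deriv u 1 < 0. Then the function t ↦ 1/√(u(t)) is integrable on the open interval (k,1) with respect to Lebesgue measure; in particular the integral ∫_{k}^{1} dt/√(u(t)) is finite. -/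
open MeasureTheory Set Filter Topology

/-!
Since `u` vanishes to first order at the endpoints, near `k` it dominates `c (t - k)` and near `1`
it dominates `c (1 - t)` for some `c > 0`, so there `1 / √u` is bounded by a multiple of the
integrable singularity `1 / √(t - k)`, resp. `1 / √(1 - t)`. On the remaining compact interval
`1 / √u` is continuous.
-/

theorem HasDerivAt.eventually_nhdsGT_add_mul_sub_lt {f : ℝ → ℝ} {f' x c : ℝ}
    (hf : HasDerivAt f f' x) (hc : c < f') :
    ∀ᶠ t in 𝓝[>] x, f x + c * (t - x) < f t := by
  have hslope : ∀ᶠ t in 𝓝[>] x, c < slope f x t :=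
    (hasDerivAt_iff_tendsto_slope.1 hf).eventually (eventually_gt_nhds hc)
      |>.filter_mono (nhdsWithin_mono x fun t ht => ne_of_gt ht)
  filter_upwards [hslope, self_mem_nhdsWithin] with t ht (htx : x < t)
  rw [slope_def_field, lt_div_iff₀ (sub_pos.2 htx)] at ht
  linarith

theorem HasDerivAt.eventually_nhdsLT_add_mul_sub_lt {f : ℝ → ℝ} {f' x c : ℝ}
    (hf : HasDerivAt f f' x) (hc : f' < c) :
    ∀ᶠ t in 𝓝[<] x, f x + c * (t - x) < f t := by
  filter_upwards [hf.hasDerivWithinAt.limsup_slope_le' (lt_irrefl x) hc, self_mem_nhdsWithin]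
    with t ht (htx : t < x)
  rw [slope_def_field, div_lt_iff_of_neg (sub_neg.2 htx)] at ht
  linarith

theorem IntervalIntegrable.integrableOn_Ioo {E : Type*} [NormedAddCommGroup E] {f : ℝ → E}
    {μ : Measure ℝ} {a b : ℝ} (hf : IntervalIntegrable f μ a b) : IntegrableOn f (Ioo a b) μ :=
  hf.def'.mono_set (Ioo_subset_Ioc_self.trans Ioc_subset_uIoc)

theorem integrableOn_one_div_sqrt_sub_left (a b : ℝ) :
    IntegrableOn (fun t => 1 / √(t - a)) (Ioo a b) := by
  have hpow : IntervalIntegrable (fun t => (t - a) ^ (-(1 / 2) : ℝ)) volume a b := by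
    simpa using (intervalIntegral.intervalIntegrable_rpow' (a := 0) (b := b - a)
      (by norm_num : (-1 : ℝ) < -(1 / 2))).comp_sub_right a
  refine hpow.integrableOn_Ioo.congr_fun (fun t ht => ?_) measurableSet_Ioo
  dsimp only
  rw [Real.rpow_neg (sub_pos.2 ht.1).le, ← Real.sqrt_eq_rpow, one_div]

theorem integrableOn_one_div_sqrt_sub_right (a b : ℝ) :
    IntegrableOn (fun t => 1 / √(b - t)) (Ioo a b) := by
  have hpow : IntervalIntegrable (fun t => (b - t) ^ (-(1 / 2) : ℝ)) volume a b := by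
    simpa using ((intervalIntegral.intervalIntegrable_rpow' (a := 0) (b := b - a)
      (by norm_num : (-1 : ℝ) < -(1 / 2))).comp_sub_left b).symm
  refine hpow.integrableOn_Ioo.congr_fun (fun t ht => ?_) measurableSet_Ioo
  dsimp only
  rw [Real.rpow_neg (sub_pos.2 ht.2).le, ← Real.sqrt_eq_rpow, one_div]

theorem integrableOn_one_div_sqrt_of_mul_le {u g : ℝ → ℝ} {c : ℝ} {s : Set ℝ}
    (hs : MeasurableSet s) (hc : 0 < c) (hg : IntegrableOn (fun t => 1 / √(g t)) s)
    (hu : AEMeasurable u (volume.restrict s)) (hgpos : ∀ t ∈ s, 0 < g t)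
    (hle : ∀ t ∈ s, c * g t ≤ u t) :
    IntegrableOn (fun t => 1 / √(u t)) s := by
  refine (hg.const_mul (√c)⁻¹).mono' (hu.sqrt.const_div 1).aestronglyMeasurable ?_
  filter_upwards [ae_restrict_mem hs] with t ht
  have hcg : 0 < c * g t := mul_pos hc (hgpos t ht)
  calc ‖1 / √(u t)‖ = 1 / √(u t) := Real.norm_of_nonneg (by positivity)
    _ ≤ 1 / √(c * g t) := one_div_le_one_div_of_le (Real.sqrt_pos.2 hcg)
        (Real.sqrt_le_sqrt (hle t ht))
    _ = (√c)⁻¹ * (1 / √(g t)) := by rw [Real.sqrt_mul hc.le, one_div, mul_inv, one_div]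

/-- if `u` is continuous on `[k,1]`, strictly positive on `(k,1)`,
vanishes at both endpoints, and vanishes to first order there
(`u'(k) > 0`, `u'(1) < 0`), then `t ↦ 1/√(u t)` is Lebesgue-integrable on `(k,1)`. -/
theorem stmt9 (k : ℝ) (hk : k < 1) (u : ℝ → ℝ)
    (hcont : ContinuousOn u (Set.Icc k 1))
    (hpos : ∀ t ∈ Set.Ioo k 1, 0 < u t)
    (hbk : u k = 0) (hb1 : u 1 = 0)
    (hdk : DifferentiableAt ℝ u k) (hdk' : 0 < deriv u k)
    (hd1 : DifferentiableAt ℝ u 1) (hd1' : deriv u 1 < 0) :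
    IntegrableOn (fun t => 1 / Real.sqrt (u t)) (Set.Ioo k 1) volume := by
  have hkm : k < (k + 1) / 2 := by linarith
  have hm1 : (k + 1) / 2 < 1 := by linarith
  obtain ⟨a, ⟨hka, ham⟩, ha⟩ := (mem_nhdsGT_iff_exists_mem_Ioc_Ioo_subset hkm).1
    (hdk.hasDerivAt.eventually_nhdsGT_add_mul_sub_lt (half_lt_self hdk'))
  obtain ⟨b, ⟨hmb, hb1'⟩, hb⟩ := (mem_nhdsLT_iff_exists_mem_Ico_Ioo_subset hm1).1
    (hd1.hasDerivAt.eventually_nhdsLT_add_mul_sub_lt (by linarith : deriv u 1 < deriv u 1 / 2))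
  have hmeas : ∀ {s}, s ⊆ Ioo k 1 → MeasurableSet s → AEMeasurable u (volume.restrict s) :=
    fun hs hsm => (hcont.mono (hs.trans Ioo_subset_Icc_self)).aemeasurable hsm
  have left : IntegrableOn (fun t => 1 / √(u t)) (Ioo k a) :=
    integrableOn_one_div_sqrt_of_mul_le measurableSet_Ioo (half_pos hdk')
      (integrableOn_one_div_sqrt_sub_left k a)
      (hmeas (Ioo_subset_Ioo_right (by linarith)) measurableSet_Ioo)
      (fun t ht => sub_pos.2 ht.1) (fun t ht => by linarith [(ha ht).out])
  have right : IntegrableOn (fun t => 1 / √(u t)) (Ioo b 1) :=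
    integrableOn_one_div_sqrt_of_mul_le measurableSet_Ioo (by linarith : 0 < -(deriv u 1 / 2))
      (integrableOn_one_div_sqrt_sub_right b 1)
      (hmeas (Ioo_subset_Ioo_left (by linarith)) measurableSet_Ioo)
      (fun t ht => sub_pos.2 ht.2) (fun t ht => by linarith [(hb ht).out])
  have middle : IntegrableOn (fun t => 1 / √(u t)) (Icc a b) := by
    refine ContinuousOn.integrableOn_compact isCompact_Icc (continuousOn_const.div ?_ ?_)
    · exact (hcont.mono (Icc_subset_Icc hka.le (by linarith))).sqrt
    · exact fun t ht => Real.sqrt_ne_zero'.2 (hpos t ⟨hka.trans_le ht.1, ht.2.trans_lt hb1'⟩)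
  rw [← Ioo_union_Ico_eq_Ioo hka (by linarith), ← Icc_union_Ioo_eq_Ico (by linarith) hb1']
  exact left.union (middle.union right)
end

section
/- For every natural number n ≥ 3, one has 2·π·n·C(2n,n)/4^n ≤ (15π/8)^(n/3), where C(2n,n) is the central binomial coefficient (Nat.choose (2n) n, regarded as a real number) and the right-hand side is the real power (15π/8)^(n/3); equality holds when n = 3. -/
/-! Writing `a n = 2 π n C(2n,n) / 4^n`, one has `a 3 = 15π/8` and
`a (n+1) = a n · (2n+1)/(2n)`. For `n ≥ 3` this ratio is at most `7/6`, which is below the cube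
root `c` of `15π/8` because `(7/6)^3 < 2 < 15π/8`; hence `a n ≤ c^n` by induction from `n = 3`. -/

open Real Nat

lemma le_pow_of_succ_le_mul {f : ℕ → ℝ} {c : ℝ} {m : ℕ} (hc : 0 ≤ c) (hm : f m ≤ c ^ m)
    (hstep : ∀ n, m ≤ n → f (n + 1) ≤ f n * c) {n : ℕ} (hn : m ≤ n) : f n ≤ c ^ n := by
  induction n, hn using Nat.le_induction with
  | base => exact hm
  | succ n hmn ih =>
    calc f (n + 1) ≤ f n * c := hstep n hmn
      _ ≤ c ^ n * c := by gcongr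
      _ = c ^ (n + 1) := (pow_succ c n).symm

lemma mul_centralBinom_succ_div_four_pow (a : ℝ) {n : ℕ} (hn : n ≠ 0) :
    a * ((n + 1 : ℕ) : ℝ) * (n + 1).centralBinom / 4 ^ (n + 1)
      = a * n * n.centralBinom / 4 ^ n * ((2 * n + 1) / (2 * n)) := by
  have hrec : ((n + 1 : ℕ) : ℝ) * (n + 1).centralBinom = 2 * (2 * n + 1) * n.centralBinom := by
    exact_mod_cast succ_mul_centralBinom_succ n
  rw [mul_assoc a, hrec]
  field_simp
  ring

lemma seven_div_six_le_rpow_inv_three : 7 / 6 ≤ (15 * π / 8) ^ (3⁻¹ : ℝ) := by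
  rw [le_rpow_inv_iff_of_pos (by norm_num) (by positivity) (by norm_num)]
  norm_num
  linarith [pi_gt_three]

/-- for `n ≥ 3`, one has `2 π n C(2n,n) / 4^n ≤ (15π/8)^(n/3)`,
with equality when `n = 3`. -/
theorem stmt13 (n : ℕ) (hn : 3 ≤ n) :
    2 * Real.pi * (n : ℝ) * (Nat.choose (2 * n) n : ℝ) / 4 ^ n
      ≤ (15 * Real.pi / 8) ^ ((n : ℝ) / 3) ∧
    2 * Real.pi * (3 : ℝ) * (Nat.choose 6 3 : ℝ) / 4 ^ 3
      = (15 * Real.pi / 8) ^ ((3 : ℝ) / 3) := by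
  have hbase : 2 * π * (3 : ℝ) * (Nat.choose 6 3 : ℝ) / 4 ^ 3 = (15 * π / 8) ^ ((3 : ℝ) / 3) := by
    rw [div_self three_ne_zero, rpow_one, show Nat.choose 6 3 = 20 by decide]
    ring
  refine ⟨?_, hbase⟩
  set c := (15 * π / 8) ^ (3⁻¹ : ℝ)
  have hpow (k : ℕ) : (15 * π / 8) ^ ((k : ℝ) / 3) = c ^ k := by
    rw [show (k : ℝ) / 3 = 3⁻¹ * k by ring, rpow_mul (by positivity), rpow_natCast]
  rw [hpow]
  refine le_pow_of_succ_le_mul (f := fun k ↦ 2 * π * k * k.centralBinom / 4 ^ k)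
    (by positivity) ?_ ?_ hn
  · rw [← hpow]
    exact_mod_cast hbase.le
  · intro k hk
    have hk' : (3 : ℝ) ≤ k := by exact_mod_cast hk
    have hratio : (2 * k + 1) / (2 * k) ≤ (7 / 6 : ℝ) := by
      rw [div_le_div_iff₀ (by positivity) (by norm_num)]
      linarith
    rw [mul_centralBinom_succ_div_four_pow _ (by omega)]
    gcongr
    exact hratio.trans seven_div_six_le_rpow_inv_three
end

section
/- Let m > 0 and 0 < k < 1 be real numbers. Define β(k) = 2√19·k^((8+√19)/5) - (8+√19)·k^((2√19)/5) + (8-√19) (which is strictly positive for 0 < k < 1), a(k) = ((10m + 4(√19-3))·k^((8+√19)/5) - 10(m+2)·k^((2√19)/5) + 4(8-√19)·k^((3+√19)/5)) / β(k), b(k) = (-(8+√19)·a(k) + 10(m+2))/(8-√19), and c(k) = (9/50)·(-(√19-2)·a(k) + (√19+2)·b(k) + 10(m-2)). Then the function u_k(t) = a(k)·t^((2-√19)/5) - 4t + b(k)·t^((2+√19)/5) - (5·c(k)/9)·t², defined for t > 0, satisfies u_k(1) = 0, u_k(k) = 0, and deriv u_k 1 = -2m. -/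
/-!
The conditions `u(1) = 0` and `u'(1) = -2m` are linear in `(a, b, c)`; the formulas for `b` and
`c` solve them for every `a` and every exponent parameter `s`. With `b` and `c` so expressed,
`u(k)` is affine in `a`, with `a`-coefficient a nonzero multiple of `β(k)`, and `a(k)` is its root. Writing `β(k) = 5 (q k^p - p k^q + (p - q))` with `q = 2√19/5 < p = (8+√19)/5`,
positivity of `β` is Bernoulli's inequality `y^(p/q) > 1 + (p/q)(y - 1)` at `y = k^q ≠ 1`.
-/

open Real

theorem mul_rpow_sub_mul_rpow_add_sub_pos {x p q : ℝ} (hx : 0 ≤ x) (hx1 : x ≠ 1)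
    (hq : 0 < q) (hqp : q < p) : 0 < q * x ^ p - p * x ^ q + (p - q) := by
  have hy : x ^ q - 1 ≠ 0 := fun h ↦ hx1 <| by
    rw [← rpow_rpow_inv hx hq.ne', sub_eq_zero.mp h, one_rpow]
  have hbern := one_add_mul_self_lt_rpow_one_add
    (by linarith [rpow_nonneg hx q]) hy ((one_lt_div hq).mpr hqp)
  rw [add_sub_cancel, ← rpow_mul hx, mul_div_cancel₀ _ hq.ne'] at hbern
  have := mul_lt_mul_of_pos_left hbern hq
  rw [mul_add, ← mul_assoc, mul_div_cancel₀ _ hq.ne'] at this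
  linarith

theorem rpow_natCast_add_div {k : ℝ} (hk : 0 < k) (n : ℕ) (x d : ℝ) :
    k ^ ((n + x) / d) = (k ^ (1 / d)) ^ n * k ^ (x / d) := by
  rw [add_div, rpow_add hk, ← rpow_natCast, ← rpow_mul hk.le, one_div_mul_eq_div]

/-- For `s = √19` the two powers solve `5t²u'' + tu' - 3u = 0` and `-4t - (5c/9)t²` is a
particular solution of `5t²u'' + tu' - 3u + 5ct² - 8t = 0`. -/
noncomputable def profile (s a b c t : ℝ) : ℝ :=
  a * t ^ ((2 - s) / 5) - 4 * t + b * t ^ ((2 + s) / 5) - (5 * c / 9) * t ^ 2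

section
variable {s m a b c : ℝ}

theorem hasDerivAt_profile {t : ℝ} (ht : t ≠ 0) :
    HasDerivAt (profile s a b c)
      (a * ((2 - s) / 5 * t ^ ((2 - s) / 5 - 1)) - 4 + b * ((2 + s) / 5 * t ^ ((2 + s) / 5 - 1))
        - 5 * c / 9 * (2 * t)) t :=
  ((((hasDerivAt_rpow_const (Or.inl ht)).const_mul a).sub ((hasDerivAt_id t).const_mul 4)).add
    ((hasDerivAt_rpow_const (Or.inl ht)).const_mul b)).sub
    ((hasDerivAt_pow 2 t).const_mul (5 * c / 9)) |>.congr_deriv (by ring)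

theorem deriv_profile_one (hc : 50 * c = 9 * (-(s - 2) * a + (s + 2) * b + 10 * (m - 2))) :
    deriv (profile s a b c) 1 = -(2 * m) := by
  rw [(hasDerivAt_profile one_ne_zero).deriv, one_rpow, one_rpow]
  linear_combination (-1 / 45) * hc

theorem profile_one (hb : (8 - s) * b = -(8 + s) * a + 10 * (m + 2))
    (hc : 50 * c = 9 * (-(s - 2) * a + (s + 2) * b + 10 * (m - 2))) :
    profile s a b c 1 = 0 := by
  rw [profile, one_rpow, one_rpow]
  linear_combination (1 / 10) * hb - (1 / 90) * hc

theorem profile_eq_zero {k : ℝ} (hk : 0 < k) (hs : s ≠ 8)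
    (ha : a * (2 * s * k ^ ((8 + s) / 5) - (8 + s) * k ^ (2 * s / 5) + (8 - s)) =
      (10 * m + 4 * (s - 3)) * k ^ ((8 + s) / 5) - 10 * (m + 2) * k ^ (2 * s / 5)
        + 4 * (8 - s) * k ^ ((3 + s) / 5))
    (hb : (8 - s) * b = -(8 + s) * a + 10 * (m + 2))
    (hc : 50 * c = 9 * (-(s - 2) * a + (s + 2) * b + 10 * (m - 2))) :
    profile s a b c k = 0 := by
  -- every power of `k` involved is a Laurent monomial in `P = k^(1/5)` and `Q = k^(s/5)`
  set P := k ^ (1 / 5 : ℝ)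
  set Q := k ^ (s / 5)
  have hQ : Q ≠ 0 := (rpow_pos_of_pos hk _).ne'
  have hpow (n : ℕ) (x : ℝ) : k ^ ((n + x) / 5) = P ^ n * k ^ (x / 5) :=
    rpow_natCast_add_div hk n x 5
  have e1 : k ^ ((2 - s) / 5) = P ^ 2 * Q⁻¹ := by
    rw [sub_eq_add_neg, ← rpow_neg hk.le, ← neg_div, ← hpow]; norm_num
  have e2 : k ^ ((2 + s) / 5) = P ^ 2 * Q := by rw [← hpow]; norm_num
  have e3 : k ^ ((3 + s) / 5) = P ^ 3 * Q := by rw [← hpow]; norm_num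
  have e8 : k ^ ((8 + s) / 5) = P ^ 8 * Q := by rw [← hpow]; norm_num
  have eQ : k ^ (2 * s / 5) = Q ^ 2 := by
    rw [← rpow_natCast, ← rpow_mul hk.le]; ring_nf
  have e5 : k = P ^ 5 := by
    rw [← rpow_natCast, ← rpow_mul hk.le]; norm_num
  rw [e8, e3, eQ] at ha
  rw [profile, e1, e2, e5]
  have h8 : 10 * (8 - s) * Q ≠ 0 := by
    have : (8 : ℝ) - s ≠ 0 := sub_ne_zero.mpr (Ne.symm hs)
    positivity
  refine (mul_eq_zero.mp ?_).resolve_left h8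
  linear_combination (10 * P ^ 2) * ha + 10 * (8 - s) * a * P ^ 2 * mul_inv_cancel₀ hQ
    + (10 * P ^ 2 * Q ^ 2 - (s + 2) * P ^ 10 * Q) * hb
    - ((8 - s) * P ^ 10 * Q / 9) * hc
end

theorem stmt14_general (m k : ℝ) (hk0 : 0 < k) (hk1 : k < 1) :
    let β : ℝ := 2 * Real.sqrt 19 * k ^ ((8 + Real.sqrt 19) / 5)
      - (8 + Real.sqrt 19) * k ^ (2 * Real.sqrt 19 / 5) + (8 - Real.sqrt 19)
    let a : ℝ := ((10 * m + 4 * (Real.sqrt 19 - 3)) * k ^ ((8 + Real.sqrt 19) / 5)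
      - 10 * (m + 2) * k ^ (2 * Real.sqrt 19 / 5)
      + 4 * (8 - Real.sqrt 19) * k ^ ((3 + Real.sqrt 19) / 5)) / β
    let b : ℝ := (-(8 + Real.sqrt 19) * a + 10 * (m + 2)) / (8 - Real.sqrt 19)
    let c : ℝ := (9 / 50) * (-(Real.sqrt 19 - 2) * a + (Real.sqrt 19 + 2) * b + 10 * (m - 2))
    let u : ℝ → ℝ := fun t =>
      a * t ^ ((2 - Real.sqrt 19) / 5) - 4 * t + b * t ^ ((2 + Real.sqrt 19) / 5)
        - (5 * c / 9) * t ^ 2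
    0 < β ∧ u 1 = 0 ∧ u k = 0 ∧ deriv u 1 = -(2 * m) := by
  intro β a b c u
  have hs0 : 0 < √19 := by positivity
  have hs8 : √19 < 8 := by rw [sqrt_lt' (by norm_num)]; norm_num
  have hβ : 0 < β := by
    have := mul_rpow_sub_mul_rpow_add_sub_pos hk0.le hk1.ne
      (by positivity : 0 < 2 * √19 / 5) (by linarith : 2 * √19 / 5 < (8 + √19) / 5)
    linarith
  have ha : a * β = _ := div_mul_cancel₀ _ hβ.ne'
  have hb : (8 - √19) * b = _ := mul_div_cancel₀ _ (by linarith)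
  have hc : 50 * c = 9 * (-(√19 - 2) * a + (√19 + 2) * b + 10 * (m - 2)) := by
    simp only [c]; ring
  exact ⟨hβ, profile_one hb hc, profile_eq_zero hk0 hs8.ne ha hb hc, deriv_profile_one hc⟩

/-- with the explicit coefficients `a(k)`, `b(k)`, `c(k)` below, the function
`u_k t = a(k) t^((2-√19)/5) - 4 t + b(k) t^((2+√19)/5) - (5 c(k)/9) t²`
satisfies `u_k 1 = 0`, `u_k k = 0`, and `u_k' 1 = -2m`. -/
theorem stmt14 (m k : ℝ) (hm : 0 < m) (hk0 : 0 < k) (hk1 : k < 1) :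
    let β : ℝ := 2 * Real.sqrt 19 * k ^ ((8 + Real.sqrt 19) / 5)
      - (8 + Real.sqrt 19) * k ^ (2 * Real.sqrt 19 / 5) + (8 - Real.sqrt 19)
    let a : ℝ := ((10 * m + 4 * (Real.sqrt 19 - 3)) * k ^ ((8 + Real.sqrt 19) / 5)
      - 10 * (m + 2) * k ^ (2 * Real.sqrt 19 / 5)
      + 4 * (8 - Real.sqrt 19) * k ^ ((3 + Real.sqrt 19) / 5)) / β
    let b : ℝ := (-(8 + Real.sqrt 19) * a + 10 * (m + 2)) / (8 - Real.sqrt 19)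
    let c : ℝ := (9 / 50) * (-(Real.sqrt 19 - 2) * a + (Real.sqrt 19 + 2) * b + 10 * (m - 2))
    let u : ℝ → ℝ := fun t =>
      a * t ^ ((2 - Real.sqrt 19) / 5) - 4 * t + b * t ^ ((2 + Real.sqrt 19) / 5)
        - (5 * c / 9) * t ^ 2
    0 < β ∧ u 1 = 0 ∧ u k = 0 ∧ deriv u 1 = -(2 * m) :=
  stmt14_general m k hk0 hk1
end

section
/- Let m > 0 and 0 < k < 1 be real numbers. With β(k) = 2√19·k^((8+√19)/5) - (8+√19)·k^((2√19)/5) + (8-√19) (which is strictly positive for 0 < k < 1), a(k) = ((10m + 4(√19-3))·k^((8+√19)/5) - 10(m+2)·k^((2√19)/5) + 4(8-√19)·k^((3+√19)/5)) / β(k), b(k) = (-(8+√19)·a(k) + 10(m+2))/(8-√19), c(k) = (9/50)·(-(√19-2)·a(k) + (√19+2)·b(k) + 10(m-2)), and u_k(t) = a(k)·t^((2-√19)/5) - 4t + b(k)·t^((2+√19)/5) - (5·c(k)/9)·t², one has the identity deriv u_k k - 2m = α(k)/β(k), where α(k) = 2((8-√19)m - 2(√19+1))·k^(1+(2√19)/5)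 - 4√19(m-2)·k^((8+√19)/5) + 2((8+√19)m - 2(√19-1))·k^((2√19)/5) - 2((8+√19)m + 2(√19-1))·k + 4√19(m+2)·k^((√19-3)/5) - 2((8-√19)m + 2(√19+1)). -/
/-!
Put `w = k ^ (1/5)` and `v = k ^ (√19/5)`. Every real power of `k` occurring in `β`, `a`, `b`,
`c`, `u'(k)` and `α` is a monomial `w ^ i * v ^ j` with `i, j ∈ ℤ`, so the identity becomes a
rational identity in `w`, `v`, `m`, `√19`, which holds modulo `√19 * √19 = 19`.
Positivity of `β` is the weighted AM-GM inequality `k ^ p < (p/q) k ^ q + (1 - p/q)` for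
`p = 2√19/5 < q = (8+√19)/5`.
-/

namespace Real

theorem rpow_lt_mul_add_one_sub {y θ : ℝ} (hy0 : 0 ≤ y) (hy1 : y ≠ 1) (hθ0 : 0 < θ)
    (hθ1 : θ < 1) : y ^ θ < θ * y + (1 - θ) := by
  have h := rpow_one_add_lt_one_add_mul_self (s := y - 1) (by linarith) (sub_ne_zero.2 hy1) hθ0 hθ1
  rw [add_sub_cancel] at h
  linarith

theorem mul_rpow_sub_mul_rpow_add_sub_pos {k p q : ℝ} (hk0 : 0 < k) (hk1 : k ≠ 1) (hp : 0 < p)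
    (hpq : p < q) : 0 < p * k ^ q - q * k ^ p + (q - p) := by
  have hq : 0 < q := hp.trans hpq
  have hkq : k ^ q ≠ 1 := by
    rcases hk1.lt_or_gt with hk1 | hk1
    · exact (rpow_lt_one hk0.le hk1 hq).ne
    · exact (one_lt_rpow hk1 hq).ne'
  have h := rpow_lt_mul_add_one_sub (rpow_nonneg hk0.le q) hkq (div_pos hp hq)
    ((div_lt_one hq).2 hpq)
  rw [← rpow_mul hk0.le, mul_div_cancel₀ p hq.ne'] at h
  have := mul_lt_mul_of_pos_left h hq
  field_simp at this
  linarith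

theorem rpow_eq_zpow_mul_zpow {k : ℝ} (hk : 0 < k) (n j : ℤ) (x y e : ℝ)
    (he : e = n * x + j * y) : k ^ e = (k ^ x) ^ n * (k ^ y) ^ j := by
  rw [he, rpow_add hk, mul_comm (n : ℝ), mul_comm (j : ℝ), rpow_mul hk.le, rpow_mul hk.le,
    rpow_intCast, rpow_intCast]

theorem hasDerivAt_profile {k : ℝ} (hk : 0 < k) (a b C p q : ℝ) :
    HasDerivAt (fun t => a * t ^ p - 4 * t + b * t ^ q - C * t ^ 2)
      (a * (p * k ^ (p - 1)) - 4 + b * (q * k ^ (q - 1)) - C * (2 * k)) k := by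
  have hp := (hasDerivAt_rpow_const (p := p) (Or.inl hk.ne')).const_mul a
  have hq := (hasDerivAt_rpow_const (p := q) (Or.inl hk.ne')).const_mul b
  exact (((hp.sub ((hasDerivAt_id k).const_mul 4)).add hq).sub
    ((hasDerivAt_pow 2 k).const_mul C)).congr_deriv (by norm_num)

theorem sqrt_nineteen_lt_eight : √19 < 8 := by
  rw [sqrt_lt' (by norm_num)]; norm_num

theorem sqrt_nineteen_weight_pos {k : ℝ} (hk0 : 0 < k) (hk1 : k ≠ 1) :
    0 < 2 * √19 * k ^ ((8 + √19) / 5) - (8 + √19) * k ^ (2 * √19 / 5) + (8 - √19) := by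
  have := mul_rpow_sub_mul_rpow_add_sub_pos hk0 hk1 (p := 2 * √19 / 5) (q := (8 + √19) / 5)
    (by positivity) (by linarith [sqrt_nineteen_lt_eight])
  linarith

end Real

theorem stmt15_general (m k : ℝ) (hk0 : 0 < k) (hk1 : k < 1) :
    let β : ℝ := 2 * Real.sqrt 19 * k ^ ((8 + Real.sqrt 19) / 5)
      - (8 + Real.sqrt 19) * k ^ (2 * Real.sqrt 19 / 5) + (8 - Real.sqrt 19)
    let a : ℝ := ((10 * m + 4 * (Real.sqrt 19 - 3)) * k ^ ((8 + Real.sqrt 19) / 5)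
      - 10 * (m + 2) * k ^ (2 * Real.sqrt 19 / 5)
      + 4 * (8 - Real.sqrt 19) * k ^ ((3 + Real.sqrt 19) / 5)) / β
    let b : ℝ := (-(8 + Real.sqrt 19) * a + 10 * (m + 2)) / (8 - Real.sqrt 19)
    let c : ℝ := (9 / 50) * (-(Real.sqrt 19 - 2) * a + (Real.sqrt 19 + 2) * b + 10 * (m - 2))
    let u : ℝ → ℝ := fun t =>
      a * t ^ ((2 - Real.sqrt 19) / 5) - 4 * t + b * t ^ ((2 + Real.sqrt 19) / 5)
        - (5 * c / 9) * t ^ 2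
    let α : ℝ :=
      2 * ((8 - Real.sqrt 19) * m - 2 * (Real.sqrt 19 + 1)) * k ^ (1 + 2 * Real.sqrt 19 / 5)
        - 4 * Real.sqrt 19 * (m - 2) * k ^ ((8 + Real.sqrt 19) / 5)
        + 2 * ((8 + Real.sqrt 19) * m - 2 * (Real.sqrt 19 - 1)) * k ^ (2 * Real.sqrt 19 / 5)
        - 2 * ((8 + Real.sqrt 19) * m + 2 * (Real.sqrt 19 - 1)) * k
        + 4 * Real.sqrt 19 * (m + 2) * k ^ ((Real.sqrt 19 - 3) / 5)
        - 2 * ((8 - Real.sqrt 19) * m + 2 * (Real.sqrt 19 + 1))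
    0 < β ∧ deriv u k - 2 * m = α / β := by
  intro β a b c u α
  have hβ : 0 < β := Real.sqrt_nineteen_weight_pos hk0 hk1.ne
  refine ⟨hβ, ?_⟩
  rw [(Real.hasDerivAt_profile hk0 a b (5 * c / 9) _ _).deriv, eq_div_iff hβ.ne']
  simp only [β, α, c, b, a] at hβ ⊢
  have hk : k = (k ^ (1 / 5 : ℝ)) ^ 5 := by
    rw [← Real.rpow_natCast, ← Real.rpow_mul hk0.le]; norm_num
  have hpow := fun n j e he => Real.rpow_eq_zpow_mul_zpow hk0 n j (1 / 5) (√19 / 5) e he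
  set w := k ^ (1 / 5 : ℝ)
  set v := k ^ (√19 / 5)
  rw [hpow 8 1 ((8 + √19) / 5) (by push_cast; ring), hpow 0 2 (2 * √19 / 5) (by push_cast; ring)]
    at hβ ⊢
  rw [hpow 3 1 ((3 + √19) / 5) (by push_cast; ring),
    hpow (-3) (-1) ((2 - √19) / 5 - 1) (by push_cast; ring),
    hpow (-3) 1 ((2 + √19) / 5 - 1) (by push_cast; ring),
    hpow 5 2 (1 + 2 * √19 / 5) (by push_cast; ring),
    hpow (-3) 1 ((√19 - 3) / 5) (by push_cast; ring), hk]
  simp only [zpow_neg, zpow_ofNat] at hβ ⊢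
  have hβ0 : v * (√19 * w ^ 8 * 2 - v * (8 + √19)) + (8 - √19) ≠ 0 :=
    ne_of_gt (hβ.trans_eq (by ring))
  have h8 : 8 - √19 ≠ 0 := sub_ne_zero.2 Real.sqrt_nineteen_lt_eight.ne'
  have hw0 : w ≠ 0 := by positivity
  have hv0 : v ≠ 0 := by positivity
  field_simp
  linear_combination 200 * (√19 - 8) * w ^ 3 * (w ^ 5 - 1) * (1 - v ^ 2) *
    Real.mul_self_sqrt (show (0 : ℝ) ≤ 19 by norm_num)

/-- with the explicit coefficients below, the defect of the fourth boundary
condition satisfies `u_k'(k) - 2m = α(k)/β(k)`. -/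
theorem stmt15 (m k : ℝ) (hm : 0 < m) (hk0 : 0 < k) (hk1 : k < 1) :
    let β : ℝ := 2 * Real.sqrt 19 * k ^ ((8 + Real.sqrt 19) / 5)
      - (8 + Real.sqrt 19) * k ^ (2 * Real.sqrt 19 / 5) + (8 - Real.sqrt 19)
    let a : ℝ := ((10 * m + 4 * (Real.sqrt 19 - 3)) * k ^ ((8 + Real.sqrt 19) / 5)
      - 10 * (m + 2) * k ^ (2 * Real.sqrt 19 / 5)
      + 4 * (8 - Real.sqrt 19) * k ^ ((3 + Real.sqrt 19) / 5)) / β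
    let b : ℝ := (-(8 + Real.sqrt 19) * a + 10 * (m + 2)) / (8 - Real.sqrt 19)
    let c : ℝ := (9 / 50) * (-(Real.sqrt 19 - 2) * a + (Real.sqrt 19 + 2) * b + 10 * (m - 2))
    let u : ℝ → ℝ := fun t =>
      a * t ^ ((2 - Real.sqrt 19) / 5) - 4 * t + b * t ^ ((2 + Real.sqrt 19) / 5)
        - (5 * c / 9) * t ^ 2
    let α : ℝ :=
      2 * ((8 - Real.sqrt 19) * m - 2 * (Real.sqrt 19 + 1)) * k ^ (1 + 2 * Real.sqrt 19 / 5)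
        - 4 * Real.sqrt 19 * (m - 2) * k ^ ((8 + Real.sqrt 19) / 5)
        + 2 * ((8 + Real.sqrt 19) * m - 2 * (Real.sqrt 19 - 1)) * k ^ (2 * Real.sqrt 19 / 5)
        - 2 * ((8 + Real.sqrt 19) * m + 2 * (Real.sqrt 19 - 1)) * k
        + 4 * Real.sqrt 19 * (m + 2) * k ^ ((Real.sqrt 19 - 3) / 5)
        - 2 * ((8 - Real.sqrt 19) * m + 2 * (Real.sqrt 19 + 1))
    0 < β ∧ deriv u k - 2 * m = α / β :=
  stmt15_general m k hk0 hk1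
end
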